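/- If δ₁₁ = δ₂₂, the map h of the two-product self-social NCPM reduces to the affine map h(x) = x + δ₁₂ 1_n - 2δ₁₂ x + δ₁₁ diag(α)(Ã x - x), it has the fixed point p* = (1/2)1_n, and the matrix M = (1-2δ₁₂)I + δ₁₁ diag(α) Ã - δ₁₁ diag(α) satisfies ‖M‖_∞ < 1; hence p(t) → (1/2)1_n exponentially for any p(0) ∈ [0,1]^n under p(t+1) = h(p(t)). -/

import Mathlib

/-!
With `δ₂₁ = δ₁₂` and `δ₂₂ = δ₁₁` the product term of `h` vanishes, so `h x = δ₁₂ 1_n + M x` is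
affine, and `(1/2) 1_n` is fixed because `Ã` is row-stochastic. Off the diagonal `M` is
nonnegative, its row sums equal `1 - 2δ₁₂`, and its diagonal entries are `1 - 2δ₁₂ - δ₁₁ αᵢ`,
so the `i`-th absolute row sum is `|2δ₁₁ - 1 - δ₁₁ αᵢ| + δ₁₁ αᵢ`, which is `< 1` in both sign
cases. The error `p t - (1/2) 1_n` is multiplied by `M` at each step, hence contracts in the sup
norm by the factor `‖M‖_∞ < 1`.
-/

/-- The two-product self-social NCPM map `h`. -/
def mapH {n : ℕ} (δ11 δ12 δ21 δ22 : ℝ) (α : Fin n → ℝ)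
    (Atil : Matrix (Fin n) (Fin n) ℝ) (x : Fin n → ℝ) : Fin n → ℝ :=
  fun i => δ12 + (1 - δ12 - δ21) * x i + δ11 * α i * (∑ j, Atil i j * x j)
    - δ22 * α i * x i + (δ22 - δ11) * α i * x i * (∑ j, Atil i j * x j)

open Matrix Finset

lemma Real.iSup_lt_of_forall_lt {ι : Type*} [Finite ι] {f : ι → ℝ} {c : ℝ} (hc : 0 < c)
    (hf : ∀ i, f i < c) : ⨆ i, f i < c := by
  cases isEmpty_or_nonempty ι
  · simpa [Real.iSup_of_isEmpty] using hc
  · obtain ⟨i, hi⟩ := exists_eq_ciSup_of_finite (f := f)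
    exact hi ▸ hf i

lemma Finset.sum_abs_eq_abs_add_sum_sub {ι : Type*} [Fintype ι] [DecidableEq ι] (f : ι → ℝ)
    (i : ι) (hf : ∀ j ≠ i, 0 ≤ f j) : ∑ j, |f j| = |f i| + (∑ j, f j - f i) := by
  rw [← add_sum_erase _ _ (mem_univ i), ← add_sum_erase _ f (mem_univ i), add_sub_cancel_left]
  congr 1
  exact sum_congr rfl fun j hj => abs_of_nonneg (hf j (ne_of_mem_erase hj))

namespace Matrix

variable {m ι : Type*} [Fintype ι]

lemma iSup_abs_mulVec_le [Finite m] (M : Matrix m ι ℝ) (x : ι → ℝ) :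
    ⨆ i, |(M *ᵥ x) i| ≤ (⨆ i, ∑ j, |M i j|) * ⨆ j, |x j| := by
  have hx : 0 ≤ ⨆ j, |x j| := Real.iSup_nonneg fun j => abs_nonneg _
  refine Real.iSup_le (fun i => ?_)
    (mul_nonneg (Real.iSup_nonneg fun i => sum_nonneg fun j _ => abs_nonneg _) hx)
  calc |(M *ᵥ x) i| ≤ ∑ j, |M i j| * |x j| := by
        simpa only [mulVec, dotProduct, abs_mul] using abs_sum_le_sum_abs (fun j => M i j * x j) _
    _ ≤ ∑ j, |M i j| * ⨆ j, |x j| := by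
        gcongr with j
        exact le_ciSup (f := fun j => |x j|) (Set.finite_range _).bddAbove j
    _ = (∑ j, |M i j|) * ⨆ j, |x j| := (sum_mul _ _ _).symm
    _ ≤ (⨆ i, ∑ j, |M i j|) * ⨆ j, |x j| := by
        gcongr
        exact le_ciSup (f := fun i => ∑ j, |M i j|) (Set.finite_range _).bddAbove i

lemma iSup_abs_le_of_mulVec_iterate (M : Matrix ι ι ℝ) {e : ℕ → ι → ℝ}
    (he : ∀ t, e (t + 1) = M *ᵥ e t) (t : ℕ) :
    ⨆ i, |e t i| ≤ (⨆ i, ∑ j, |M i j|) ^ t * ⨆ i, |e 0 i| := by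
  induction t with
  | zero => simp
  | succ t ih =>
    have hρ : 0 ≤ ⨆ i, ∑ j, |M i j| :=
      Real.iSup_nonneg fun i => sum_nonneg fun j _ => abs_nonneg _
    calc ⨆ i, |e (t + 1) i| ≤ (⨆ i, ∑ j, |M i j|) * ⨆ i, |e t i| :=
          he t ▸ iSup_abs_mulVec_le M (e t)
      _ ≤ (⨆ i, ∑ j, |M i j|) * ((⨆ i, ∑ j, |M i j|) ^ t * ⨆ i, |e 0 i|) := by gcongr
      _ = (⨆ i, ∑ j, |M i j|) ^ (t + 1) * ⨆ i, |e 0 i| := by ring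

lemma sub_mulVec_sub_of_affine (M : Matrix ι ι ℝ) (b : ι → ℝ) {f : (ι → ℝ) → ι → ℝ}
    (hf : ∀ x, f x = b + M *ᵥ x) {c : ι → ℝ} (hc : f c = c) (x : ι → ℝ) :
    f x - c = M *ᵥ (x - c) := by
  calc f x - c = f x - f c := by rw [hc]
    _ = M *ᵥ (x - c) := by rw [hf, hf, mulVec_sub]; abel

lemma sum_abs_smul_one_add_smul_diagonal_mul_sub_apply [DecidableEq ι] (c d : ℝ) (α : ι → ℝ)
    (A : Matrix ι ι ℝ) (i : ι) (hd : 0 ≤ d) (hα : 0 ≤ α i) (hA0 : ∀ j, 0 ≤ A i j)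
    (hA1 : ∑ j, A i j = 1) (hAii : A i i = 0) :
    ∑ j, |(c • (1 : Matrix ι ι ℝ) + d • (diagonal α * A) - d • diagonal α) i j|
      = |c - d * α i| + d * α i := by
  have hentry : ∀ j, (c • (1 : Matrix ι ι ℝ) + d • (diagonal α * A) - d • diagonal α) i j
      = (if i = j then c - d * α i else 0) + d * α i * A i j := by
    intro j
    simp only [sub_apply, add_apply, smul_apply, one_apply, diagonal_mul, diagonal_apply,
      smul_eq_mul]
    split_ifs <;> ring
  rw [sum_abs_eq_abs_add_sum_sub _ i fun j hj => by
    rw [hentry, if_neg hj.symm, zero_add]; exact mul_nonneg (mul_nonneg hd hα) (hA0 j)]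
  simp only [hentry, sum_add_distrib, sum_ite_eq, mem_univ, if_true, ← mul_sum, hA1, hAii,
    mul_zero, add_zero]
  ring

end Matrix

section NCPM

variable {n : ℕ} (δ11 δ12 : ℝ) (α : Fin n → ℝ) (A : Matrix (Fin n) (Fin n) ℝ)

lemma mapH_symm_eq (x : Fin n → ℝ) :
    mapH δ11 δ12 δ12 δ11 α A x = fun i => δ12 +
      ∑ j, ((1 - 2 * δ12) • (1 : Matrix (Fin n) (Fin n) ℝ)
        + δ11 • (diagonal α * A) - δ11 • diagonal α) i j * x j := by
  funext i
  change _ = δ12 + ((_ : Matrix (Fin n) (Fin n) ℝ) *ᵥ x) i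
  simp only [sub_mulVec, add_mulVec, smul_mulVec, one_mulVec, ← mulVec_mulVec, mulVec_diagonal,
    Pi.add_apply, Pi.sub_apply, Pi.smul_apply, smul_eq_mul, mapH]
  simp only [mulVec, dotProduct]
  ring

lemma mapH_symm_half (hA : ∀ i, ∑ j, A i j = 1) :
    mapH δ11 δ12 δ12 δ11 α A (fun _ => 1 / 2) = fun _ => 1 / 2 := by
  funext i
  simp only [mapH, ← sum_mul, hA]
  ring

lemma mapH_symm_linearPart_sum_abs_lt_one (h11 : 0 < δ11 ∧ δ11 < 1) (h12 : δ12 = 1 - δ11)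
    (i : Fin n) (hα : 0 < α i ∧ α i < 1) (hA0 : ∀ j, 0 ≤ A i j) (hA1 : ∑ j, A i j = 1)
    (hAii : A i i = 0) :
    ∑ j, |((1 - 2 * δ12) • (1 : Matrix (Fin n) (Fin n) ℝ)
      + δ11 • (diagonal α * A) - δ11 • diagonal α) i j| < 1 := by
  obtain ⟨hδ0, hδ1⟩ := h11
  rw [sum_abs_smul_one_add_smul_diagonal_mul_sub_apply _ _ _ _ _ hδ0.le hα.1.le hA0 hA1 hAii, h12]
  cases abs_cases (1 - 2 * (1 - δ11) - δ11 * α i) <;> nlinarith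

end NCPM

theorem stmt_14 (n : ℕ) (δ11 δ12 : ℝ)
    (h11 : 0 < δ11 ∧ δ11 < 1) (h12 : δ12 = 1 - δ11)
    (α : Fin n → ℝ) (hα : ∀ i, 0 < α i ∧ α i < 1)
    (Atil : Matrix (Fin n) (Fin n) ℝ)
    (hA0 : ∀ i j, 0 ≤ Atil i j) (hA1 : ∀ i, ∑ j, Atil i j = 1)
    (hAdiag : ∀ i, Atil i i = 0)
    (M : Matrix (Fin n) (Fin n) ℝ)
    (hM : M = (1 - 2 * δ12) • (1 : Matrix (Fin n) (Fin n) ℝ)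
      + δ11 • (Matrix.diagonal α * Atil) - δ11 • Matrix.diagonal α) :
    (∀ x : Fin n → ℝ, mapH δ11 δ12 δ12 δ11 α Atil x =
      fun i => δ12 + ∑ j, M i j * x j) ∧
    (mapH δ11 δ12 δ12 δ11 α Atil (fun _ => 1 / 2) = fun _ => 1 / 2) ∧
    (⨆ i, ∑ j, |M i j|) < 1 ∧
    (∀ p : ℕ → Fin n → ℝ, (∀ i, 0 ≤ p 0 i ∧ p 0 i ≤ 1) →
      (∀ t, p (t + 1) = mapH δ11 δ12 δ12 δ11 α Atil (p t)) →
      ∃ C > (0 : ℝ), ∃ ξ : ℝ, 0 < ξ ∧ ξ < 1 ∧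
        ∀ t, (⨆ i, |p t i - 1 / 2|) ≤ C * ξ ^ t) := by
  have haffine : ∀ x, mapH δ11 δ12 δ12 δ11 α Atil x = fun i => δ12 + ∑ j, M i j * x j :=
    hM ▸ mapH_symm_eq δ11 δ12 α Atil
  have hfixed := mapH_symm_half δ11 δ12 α Atil hA1
  have hrow : ∀ i, ∑ j, |M i j| < 1 := hM ▸ fun i =>
    mapH_symm_linearPart_sum_abs_lt_one δ11 δ12 α Atil h11 h12 i (hα i) (hA0 i) (hA1 i) (hAdiag i)
  have hρ1 := Real.iSup_lt_of_forall_lt one_pos hrow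
  refine ⟨haffine, hfixed, hρ1, fun p _ hp => ?_⟩
  set ρ := ⨆ i, ∑ j, |M i j|
  have hρ0 : 0 ≤ ρ := Real.iSup_nonneg fun i => sum_nonneg fun j _ => abs_nonneg _
  set S₀ := ⨆ i, |p 0 i - 1 / 2|
  have hS₀ : 0 ≤ S₀ := Real.iSup_nonneg fun i => abs_nonneg _
  have herror : ∀ t, p (t + 1) - (fun _ => 1 / 2) = M *ᵥ (p t - fun _ => 1 / 2) := fun t =>
    hp t ▸ sub_mulVec_sub_of_affine M (fun _ => δ12) haffine hfixed (p t)
  -- not `ρ` itself, which is `0` when `n = 0`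
  refine ⟨S₀ + 1, by positivity, (1 + ρ) / 2, by positivity, by linarith, fun t => ?_⟩
  calc ⨆ i, |p t i - 1 / 2| ≤ ρ ^ t * S₀ :=
        iSup_abs_le_of_mulVec_iterate (e := fun t => p t - fun _ => 1 / 2) M herror t
    _ ≤ ((1 + ρ) / 2) ^ t * (S₀ + 1) := by gcongr <;> linarith
    _ = (S₀ + 1) * ((1 + ρ) / 2) ^ t := mul_comm _ _
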